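/- Let V(k) = k² − 2·log k for k > 0. If 0 < a < 1 < b and V(a) = V(b), then 1 − a² < b² − 1 (equivalently a² + b² > 2). In particular, if 0 < a < 1 < b and exp((a²−1)/2)/a = exp((b²−1)/2)/b, then 1 − a² < b² − 1. -/

import Mathlib

/-! With `u = a²` and `w = b²`, the equation `V a = V b` says `w - u = log w - log u`: the
logarithmic mean of `u` and `w` is `1`. The logarithmic mean is strictly smaller than the
arithmetic mean, hence `(u + w) / 2 > 1`. -/

open Real

noncomputable def V (k : ℝ) : ℝ := k ^ 2 - 2 * Real.log k

noncomputable def K (R : ℝ) : ℝ := Real.exp ((R ^ 2 - 1) / 2) / R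

lemma two_mul_sub_div_add_lt_log_sub_log {u w : ℝ} (hu : 0 < u) (huw : u < w) :
    2 * (w - u) / (w + u) < log w - log u := by
  have hx : 0 < w / u - 1 := by rw [sub_pos, one_lt_div hu]; exact huw
  have key := lt_log_one_add_of_pos hx
  rwa [add_sub_cancel, log_div (by linarith) hu.ne',
    show 2 * (w / u - 1) / (w / u - 1 + 2) = 2 * (w - u) / (w + u) by
      field_simp; ring_nf] at key

lemma two_lt_add_of_sub_eq_log_sub_log {u w : ℝ} (hu : 0 < u) (huw : u < w)
    (h : w - u = log w - log u) : 2 < u + w := by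
  have hmean := two_mul_sub_div_add_lt_log_sub_log hu huw
  rw [← h, div_lt_iff₀ (by linarith)] at hmean
  nlinarith

lemma V_eq_sq_sub_log_sq (k : ℝ) : V k = k ^ 2 - log (k ^ 2) := by
  rw [V, log_pow]; push_cast; ring

lemma two_lt_sq_add_sq_of_V_eq {a b : ℝ} (ha : 0 < a) (hab : a < b) (h : V a = V b) :
    2 < a ^ 2 + b ^ 2 := by
  rw [V_eq_sq_sub_log_sq, V_eq_sq_sub_log_sq] at h
  exact two_lt_add_of_sub_eq_log_sub_log (by positivity) (by gcongr) (by linarith)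

lemma K_eq_exp_V {R : ℝ} (hR : 0 < R) : K R = exp ((V R - 1) / 2) := by
  rw [K, V, ← exp_log hR, ← exp_sub, log_exp]
  ring_nf

lemma V_eq_of_K_eq {a b : ℝ} (ha : 0 < a) (hb : 0 < b) (h : K a = K b) : V a = V b := by
  rw [K_eq_exp_V ha, K_eq_exp_V hb, exp_eq_exp] at h
  linarith

theorem stmt_0 :
    (∀ a b : ℝ, 0 < a → a < 1 → 1 < b → V a = V b → 1 - a ^ 2 < b ^ 2 - 1) ∧
    (∀ a b : ℝ, 0 < a → a < 1 → 1 < b → K a = K b → 1 - a ^ 2 < b ^ 2 - 1) := by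
  refine ⟨fun a b ha ha1 hb hV => ?_, fun a b ha ha1 hb hK => ?_⟩
  · linarith [two_lt_sq_add_sq_of_V_eq ha (ha1.trans hb) hV]
  · have hV := V_eq_of_K_eq ha (by linarith) hK
    linarith [two_lt_sq_add_sq_of_V_eq ha (ha1.trans hb) hV]
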